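/- For every integer n ≥ 2 and every x ∈ ℂ, (x² + 4)·F(n−1) = ∏_{k=1}^{n} (x + 2i·cos((k−1)π/(n−1))), where F(k) denotes the k-th Fibonacci polynomial evaluated at x and i = √−1. Equivalently, whenever x² + 4 ≠ 0, F(n−1) = (1/(x²+4))·∏_{k=1}^{n} (x + 2i·cos((k−1)π/(n−1))). -/

import Mathlib

/-!
Up to the substitution `x ↦ i x` and the factor `(-i)ⁿ`, the Fibonacci polynomial `F (n + 1)` is the
Vieta–Fibonacci polynomial `Sₙ` (the rescaled Chebyshev polynomial of the second kind). The identity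
`Sₙ(2 cos θ) sin θ = sin ((n + 1) θ)` exhibits the `n` distinct real roots `2 cos (kπ / (n + 1))`,
`0 < k < n + 1`, of the monic degree-`n` polynomial `Sₙ`, so `Sₙ` is the product of the corresponding
linear factors. In the product of the statement, the two outer factors (angles `0` and `π`) are
`x + 2i` and `x - 2i`, whose product is `x² + 4`.
-/

def fibP (x : ℂ) : ℕ → ℂ
  | 0 => 0
  | 1 => 1
  | (k + 2) => x * fibP x (k + 1) + fibP x k

open Polynomial Real Finset

theorem nat_mul_pi_div_succ_mem_Ioo {n k : ℕ} (hk : k ∈ Ioo 0 (n + 1)) :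
    (k * π / (n + 1) : ℝ) ∈ Set.Ioo 0 π := by
  obtain ⟨hk0, hkn⟩ := mem_Ioo.mp hk
  refine ⟨by positivity, ?_⟩
  rw [div_lt_iff₀ (by positivity), mul_comm]
  gcongr
  exact_mod_cast hkn

theorem injOn_two_mul_cos_nat_mul_pi_div_succ (n : ℕ) :
    Set.InjOn (fun k : ℕ ↦ 2 * cos (k * π / (n + 1))) (Ioo 0 (n + 1)) := by
  intro a ha b hb hab
  have := injOn_cos (Set.Ioo_subset_Icc_self (nat_mul_pi_div_succ_mem_Ioo ha))
    (Set.Ioo_subset_Icc_self (nat_mul_pi_div_succ_mem_Ioo hb)) (by simpa using hab)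
  field_simp at this
  exact_mod_cast this

namespace Polynomial.Chebyshev

section Degree

variable (R : Type*) [CommRing R] [Nontrivial R]

theorem degree_S_natCast (n : ℕ) : (S R n).degree = n := by
  induction n using Nat.twoStepInduction with
  | zero => simp
  | one => simp
  | more n ih1 ih2 =>
    push_cast at ih2 ⊢
    have hXS : (X * S R (n + 1)).degree = ↑(n + 2) := by
      rw [mul_comm, degree_mul_X, ih2]; norm_cast
    rw [S_add_two, degree_sub_eq_left_of_degree_lt] <;> rw [hXS]
    · norm_cast
    · rw [ih1]; norm_cast; omega

theorem natDegree_S_natCast (n : ℕ) : (S R n).natDegree = n :=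
  natDegree_eq_of_degree_eq_some (degree_S_natCast R n)

theorem monic_S_natCast (n : ℕ) : (S R n).Monic := by
  induction n using Nat.twoStepInduction with
  | zero => simp
  | one => simp
  | more n ih1 ih2 =>
    push_cast at ih2 ⊢
    rw [S_add_two]
    refine (monic_X.mul ih2).sub_of_left ?_
    rw [mul_comm, degree_mul_X, ← Nat.cast_add_one, degree_S_natCast, degree_S_natCast]
    norm_cast; omega

end Degree

theorem S_real_eval_two_mul_cos_nat_mul_pi_div_succ {n k : ℕ} (hk : k ∈ Ioo 0 (n + 1)) :
    (S ℝ n).eval (2 * cos (k * π / (n + 1))) = 0 := by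
  have hsin : sin (k * π / (n + 1)) ≠ 0 :=
    (sin_pos_of_mem_Ioo (nat_mul_pi_div_succ_mem_Ioo hk)).ne'
  have key := S_two_mul_real_cos (k * π / (n + 1)) n
  rw [show ((n : ℤ) + 1 : ℝ) * (k * π / (n + 1)) = k * π by push_cast; field_simp,
    sin_nat_mul_pi] at key
  exact (mul_eq_zero.mp key).resolve_right hsin

theorem S_real_eq_prod (n : ℕ) :
    S ℝ n = ∏ k ∈ Ioo 0 (n + 1), (X - Polynomial.C (2 * cos (k * π / (n + 1)))) := by
  set roots := (Ioo 0 (n + 1)).image fun k : ℕ ↦ 2 * cos (k * π / (n + 1))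
  have hinj := injOn_two_mul_cos_nat_mul_pi_div_succ n
  have hcard : #roots = n := by simp [roots, card_image_of_injOn hinj]
  have hroots : (S ℝ n).roots = roots.val := by
    refine roots_eq_of_degree_eq_card ?_ (by rw [hcard, degree_S_natCast])
    simp only [roots, mem_image, forall_exists_index, and_imp, forall_apply_eq_imp_iff₂]
    exact fun k hk ↦ S_real_eval_two_mul_cos_nat_mul_pi_div_succ hk
  rw [← prod_multiset_X_sub_C_of_monic_of_roots_card_eq (monic_S_natCast ℝ n)
    (by rw [hroots, card_val, hcard, natDegree_S_natCast]), hroots, ← prod_eq_multiset_prod,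
    prod_image hinj]

end Polynomial.Chebyshev

theorem fibP_succ_eq_eval_S (x : ℂ) (n : ℕ) :
    fibP x (n + 1) = (-Complex.I) ^ n * (Chebyshev.S ℂ n).eval (Complex.I * x) := by
  induction n using Nat.twoStepInduction with
  | zero => simp [fibP]
  | one => simp [fibP, ← mul_assoc]
  | more n ih1 ih2 =>
    rw [show fibP x (n + 2 + 1) = x * fibP x (n + 1 + 1) + fibP x (n + 1) from rfl, ih1, ih2]
    push_cast at ih2 ⊢
    rw [Chebyshev.S_add_two]
    simp only [eval_sub, eval_mul, eval_X]
    linear_combination ((-Complex.I) ^ n * eval (Complex.I * x) (Chebyshev.S ℂ n) -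
      (-Complex.I) ^ n * Complex.I * x * eval (Complex.I * x) (Chebyshev.S ℂ (n + 1))) *
      Complex.I_sq

theorem fibP_succ_eq_prod (x : ℂ) (n : ℕ) :
    fibP x (n + 1) = ∏ k ∈ Ioo 0 (n + 1), (x + 2 * Complex.I * (cos (k * π / (n + 1)) : ℂ)) := by
  rw [fibP_succ_eq_eval_S, ← Chebyshev.map_S (algebraMap ℝ ℂ), Chebyshev.S_real_eq_prod,
    Polynomial.map_prod, eval_prod,
    show (-Complex.I) ^ n = ∏ _k ∈ Ioo 0 (n + 1), -Complex.I by simp, ← prod_mul_distrib]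
  refine prod_congr rfl fun k _ ↦ ?_
  simp only [Polynomial.map_sub, map_X, map_C, eval_sub, eval_X, eval_C, Complex.coe_algebraMap,
    Complex.ofReal_mul, Complex.ofReal_ofNat]
  linear_combination (-x) * Complex.I_sq

/-- For `n ≥ 2` and `x : ℂ`,
`(x² + 4)·F_{n-1}(x) = ∏_{k=1}^{n} (x + 2i·cos((k-1)π/(n-1)))`; equivalently,
if `x² + 4 ≠ 0` then `F_{n-1}(x) = (1/(x²+4))·∏_{k=1}^{n} (x + 2i·cos((k-1)π/(n-1)))`. -/
theorem fibP_complex_factorization (n : ℕ) (hn : 2 ≤ n) (x : ℂ) :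
    ((x ^ 2 + 4) * fibP x (n - 1) =
        ∏ k ∈ Finset.Icc 1 n,
          (x + 2 * Complex.I *
            (Real.cos (((k : ℝ) - 1) * Real.pi / ((n : ℝ) - 1)) : ℂ))) ∧
      (x ^ 2 + 4 ≠ 0 →
        fibP x (n - 1) =
          (1 / (x ^ 2 + 4)) *
            ∏ k ∈ Finset.Icc 1 n,
              (x + 2 * Complex.I *
                (Real.cos (((k : ℝ) - 1) * Real.pi / ((n : ℝ) - 1)) : ℂ))) := by
  obtain ⟨m, rfl⟩ : ∃ m, n = m + 2 := ⟨n - 2, by omega⟩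
  set g : ℕ → ℂ := fun j ↦ x + 2 * Complex.I * (cos (j * π / (m + 1)) : ℂ)
  have hshift : ∏ k ∈ Icc 1 (m + 2),
      (x + 2 * Complex.I * (cos (((k : ℝ) - 1) * π / (((m + 2 : ℕ) : ℝ) - 1)) : ℂ)) =
      ∏ j ∈ Icc 0 (m + 1), g j := by
    rw [← map_add_right_Icc 0 (m + 1) 1, prod_map]
    refine prod_congr rfl fun j _ ↦ ?_
    simp only [addRightEmbedding_apply, g]
    push_cast
    ring_nf
  have hends : g 0 * g (m + 1) = x ^ 2 + 4 := by
    have hπ : ((m + 1 : ℕ) : ℝ) * π / (m + 1) = π := by push_cast; field_simp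
    simp only [g, Nat.cast_zero, zero_mul, zero_div, cos_zero, hπ, cos_pi]
    push_cast
    linear_combination (-4) * Complex.I_sq
  have hprod : (x ^ 2 + 4) * fibP x (m + 2 - 1) = ∏ j ∈ Icc 0 (m + 1), g j := by
    rw [← Ioc_insert_left (by omega), ← Ioo_insert_right (by omega), prod_insert (by simp),
      prod_insert (by simp), show m + 2 - 1 = m + 1 from rfl, fibP_succ_eq_prod, ← hends]
    ring
  rw [hshift, ← hprod]
  exact ⟨rfl, fun h ↦ by rw [one_div, inv_mul_cancel_left₀ h]⟩
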